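/- arXiv:2310.15001 — 4 statements merged into one kernel-verified Lean document; each statement's English description precedes it below -/
import Mathlib

section
/- Let $A$ be an invertible $N\times N$ complex matrix, let $U=(U_k, U_{N-k})$ be a unitary matrix partitioned into an $N\times k$ block $U_k$ and an $N\times(N-k)$ block $U_{N-k}$, and suppose $B = U_{N-k}^* A U_{N-k}$ and $U_k^* A^{-1} U_k$ are invertible. Then $U \begin{pmatrix}0&0\\0&B^{-1}\end{pmatrix} U^* = A^{-1} - A^{-1} U_k (U_k^* A^{-1} U_k)^{-1} U_k^* A^{-1}$. -/
open Matrix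

/-- Resolvent of a compression: if `A` is invertible, `U = (U_k, U_l)` is unitary
(columns split into the first `k` and last `l = N - k`), `B = U_lᴴ A U_l` and
`U_kᴴ A⁻¹ U_k` are invertible, then
`U (0 ⊕ B⁻¹) Uᴴ = A⁻¹ - A⁻¹ U_k (U_kᴴ A⁻¹ U_k)⁻¹ U_kᴴ A⁻¹`. -/
theorem minor_resolvent
    {N k l : ℕ}
    (A : Matrix (Fin N) (Fin N) ℂ)
    (U : Matrix (Fin N) (Fin k ⊕ Fin l) ℂ)
    (hU₁ : Uᴴ * U = 1) (hU₂ : U * Uᴴ = 1)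
    (Uk : Matrix (Fin N) (Fin k) ℂ) (hUk : Uk = fun i j => U i (Sum.inl j))
    (Ul : Matrix (Fin N) (Fin l) ℂ) (hUl : Ul = fun i j => U i (Sum.inr j))
    (B : Matrix (Fin l) (Fin l) ℂ) (hB : B = Ulᴴ * A * Ul)
    (hA : IsUnit A.det) (hBinv : IsUnit B.det)
    (hcomp : IsUnit (Ukᴴ * A⁻¹ * Uk).det) :
    U * (Matrix.fromBlocks 0 0 0 B⁻¹ : Matrix (Fin k ⊕ Fin l) (Fin k ⊕ Fin l) ℂ) * Uᴴ
      = A⁻¹ - A⁻¹ * Uk * (Ukᴴ * A⁻¹ * Uk)⁻¹ * Ukᴴ * A⁻¹ := by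
  have hUcols : U = fromCols Uk Ul := by
    ext i j
    cases j with
    | inl j => simp [fromCols, hUk]
    | inr j => simp [fromCols, hUl]
  set C : Matrix (Fin k) (Fin k) ℂ := Ukᴴ * A⁻¹ * Uk with hC
  -- orthogonality relations
  have horth : Ukᴴ * Uk = 1 ∧ Ukᴴ * Ul = 0 ∧ Ulᴴ * Uk = 0 ∧ Ulᴴ * Ul = 1 := by
    have h := hU₁
    rw [hUcols, conjTranspose_fromCols_eq_fromRows_conjTranspose,
      fromRows_mul_fromCols] at h
    have h11 := congrArg (Matrix.toBlocks₁₁) h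
    have h12 := congrArg (Matrix.toBlocks₁₂) h
    have h21 := congrArg (Matrix.toBlocks₂₁) h
    have h22 := congrArg (Matrix.toBlocks₂₂) h
    simp only [toBlocks₁₁, toBlocks₁₂, toBlocks₂₁, toBlocks₂₂] at h11 h12 h21 h22
    refine ⟨?_, ?_, ?_, ?_⟩ <;> ext i j
    · have := congrFun (congrFun h11 i) j
      simpa [fromBlocks, Matrix.one_apply] using this
    · have := congrFun (congrFun h12 i) j
      simpa [fromBlocks, Matrix.one_apply] using this
    · have := congrFun (congrFun h21 i) j
      simpa [fromBlocks, Matrix.one_apply] using this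
    · have := congrFun (congrFun h22 i) j
      simpa [fromBlocks, Matrix.one_apply] using this
  obtain ⟨hkk, hkl, hlk, hll⟩ := horth
  have hcompl : Uk * Ukᴴ + Ul * Ulᴴ = 1 := by
    rw [← fromCols_mul_fromRows Uk Ul Ukᴴ Ulᴴ,
      ← conjTranspose_fromCols_eq_fromRows_conjTranspose, ← hUcols, hU₂]
  -- inverses
  have hAA : A * A⁻¹ = 1 := mul_nonsing_inv A hA
  have hAA' : A⁻¹ * A = 1 := nonsing_inv_mul A hA
  have hBB : B * B⁻¹ = 1 := mul_nonsing_inv B hBinv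
  have hBB' : B⁻¹ * B = 1 := nonsing_inv_mul B hBinv
  have hCC : C * C⁻¹ = 1 := mul_nonsing_inv C hcomp
  -- left side simplification
  have hLHS : U * (Matrix.fromBlocks 0 0 0 B⁻¹ : Matrix (Fin k ⊕ Fin l) (Fin k ⊕ Fin l) ℂ) * Uᴴ = Ul * B⁻¹ * Ulᴴ := by
    rw [hUcols, conjTranspose_fromCols_eq_fromRows_conjTranspose,
      fromCols_mul_fromBlocks]
    simp [fromCols_mul_fromRows, Matrix.mul_assoc]
  rw [hLHS]
  set X : Matrix (Fin N) (Fin N) ℂ := Ul * B⁻¹ * Ulᴴ with hX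
  set Y : Matrix (Fin N) (Fin N) ℂ := A⁻¹ - A⁻¹ * Uk * C⁻¹ * Ukᴴ * A⁻¹ with hY
  set D : Matrix (Fin N) (Fin N) ℂ := X - Y with hD
  have hUkD : Ukᴴ * D = 0 := by
    have h1 : Ukᴴ * X = 0 := by
      rw [hX, ← Matrix.mul_assoc, ← Matrix.mul_assoc, hkl, Matrix.zero_mul,
        Matrix.zero_mul]
    have h2 : Ukᴴ * Y = 0 := by
      have : Ukᴴ * (A⁻¹ * Uk * C⁻¹ * Ukᴴ * A⁻¹)
          = C * C⁻¹ * (Ukᴴ * A⁻¹) := by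
        simp only [hC, Matrix.mul_assoc]
      rw [hY, Matrix.mul_sub, this, hCC, Matrix.one_mul, sub_self]
    rw [hD, Matrix.mul_sub, h1, h2, sub_self]
  have hUlAD : Ulᴴ * A * D = 0 := by
    have h1 : Ulᴴ * A * X = Ulᴴ := by
      rw [hX, ← Matrix.mul_assoc, ← Matrix.mul_assoc, ← hB]
      rw [Matrix.mul_assoc B, ← Matrix.mul_assoc B, hBB, Matrix.one_mul]
    have h2 : Ulᴴ * A * Y = Ulᴴ := by
      have e1 : Ulᴴ * A * A⁻¹ = Ulᴴ := by
        rw [Matrix.mul_assoc, hAA, Matrix.mul_one]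
      have e2 : Ulᴴ * A * (A⁻¹ * Uk * C⁻¹ * Ukᴴ * A⁻¹) = 0 := by
        have : Ulᴴ * A * (A⁻¹ * Uk * C⁻¹ * Ukᴴ * A⁻¹)
            = Ulᴴ * (A * A⁻¹) * Uk * (C⁻¹ * Ukᴴ * A⁻¹) := by
          simp only [Matrix.mul_assoc]
        rw [this, hAA, Matrix.mul_one, hlk, Matrix.zero_mul]
      rw [hY, Matrix.mul_sub, e1, e2, sub_zero]
    rw [hD, Matrix.mul_sub, h1, h2, sub_self]
  have hDeq : D = Ul * (Ulᴴ * D) := by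
    calc D = 1 * D := (Matrix.one_mul D).symm
    _ = (Uk * Ukᴴ + Ul * Ulᴴ) * D := by rw [hcompl]
    _ = Uk * (Ukᴴ * D) + Ul * (Ulᴴ * D) := by
        rw [Matrix.add_mul, Matrix.mul_assoc, Matrix.mul_assoc]
    _ = Ul * (Ulᴴ * D) := by rw [hUkD, Matrix.mul_zero, zero_add]
  have hBD : B * (Ulᴴ * D) = 0 := by
    rw [hB]
    calc Ulᴴ * A * Ul * (Ulᴴ * D) = Ulᴴ * A * (Ul * (Ulᴴ * D)) := by
          rw [Matrix.mul_assoc]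
    _ = Ulᴴ * A * D := by rw [← hDeq]
    _ = 0 := hUlAD
  have hUlD : Ulᴴ * D = 0 := by
    calc Ulᴴ * D = 1 * (Ulᴴ * D) := (Matrix.one_mul _).symm
    _ = B⁻¹ * (B * (Ulᴴ * D)) := by rw [← hBB', Matrix.mul_assoc]
    _ = 0 := by rw [hBD, Matrix.mul_zero]
  have : D = 0 := by rw [hDeq, hUlD, Matrix.mul_zero]
  have := sub_eq_zero.mp (hD ▸ this)
  rw [this]
end

section
/- Let $A$ be an $N\times N$ complex matrix with $\Re A := \frac{1}{2}(A+A^*)$ positive definite, and let $U_k$ be an $N\times k$ matrix with orthonormal columns. Then $\|A^{-1} U_k (U_k^* A^{-1} U_k)^{-1} U_k^* A^{-1}\| \le \|(\Re A)^{-1}\|$, where $\|\cdot\|$ denotes the operator norm. -/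
open Matrix
open scoped Matrix.Norms.L2Operator ComplexOrder

namespace MinorAux

variable {n m : Type*} [Fintype n] [Fintype m] [DecidableEq n] [DecidableEq m]

set_option linter.unusedSectionVars false

/-- `⟨Mv, w⟩ = ⟨v, Mᴴ w⟩` at the level of star-dotProduct. -/
lemma star_mulVec_dot (M : Matrix n m ℂ) (v : m → ℂ) (w : n → ℂ) :
    star (M *ᵥ v) ⬝ᵥ w = star v ⬝ᵥ (Mᴴ *ᵥ w) := by
  rw [star_mulVec, ← dotProduct_mulVec]

lemma isUnit_of_posDef_re {A : Matrix n n ℂ} (h : ((1 / 2 : ℂ) • (A + Aᴴ)).PosDef) :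
    IsUnit A := by
  rw [← Matrix.mulVec_injective_iff_isUnit]
  have key : ∀ z, A *ᵥ z = 0 → z = 0 := by
    intro z hz
    by_contra hz0
    have hpos := h.dotProduct_mulVec_pos hz0
    have h2 : star z ⬝ᵥ (((1 / 2 : ℂ) • (A + Aᴴ)) *ᵥ z) = 0 := by
      rw [smul_mulVec, add_mulVec, hz, zero_add, dotProduct_smul,
        ← star_mulVec_dot, hz]
      simp
    rw [h2] at hpos
    exact lt_irrefl _ hpos
  intro x y hxy
  have := key (x - y) (by rw [mulVec_sub, hxy, sub_self])
  exact sub_eq_zero.mp this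

lemma mulVec_eq_zero_of_isUnit {A : Matrix n n ℂ} (h : IsUnit A) :
    ∀ x, A *ᵥ x = 0 → x = 0 := by
  intro x hx
  have hinj := Matrix.mulVec_injective_iff_isUnit.mpr h
  have : A *ᵥ x = A *ᵥ 0 := by rw [hx, Matrix.mulVec_zero]
  exact hinj this

lemma posDef_conj {C : Matrix n n ℂ} (hC : C.PosDef) (U : Matrix n m ℂ)
    (hU : ∀ x : m → ℂ, U *ᵥ x = 0 → x = 0) : (Uᴴ * C * U).PosDef := by
  refine Matrix.PosDef.of_dotProduct_mulVec_pos (Matrix.isHermitian_conjTranspose_mul_mul U hC.1) fun x hx => ?_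
  have h1 : star x ⬝ᵥ ((Uᴴ * C * U) *ᵥ x) = star (U *ᵥ x) ⬝ᵥ (C *ᵥ (U *ᵥ x)) := by
    rw [star_mulVec_dot, mulVec_mulVec, mulVec_mulVec, Matrix.mul_assoc]
  rw [h1]
  exact hC.dotProduct_mulVec_pos (fun h => hx (hU x h))

open scoped MatrixOrder in
/-- For a PSD matrix `K`, `‖Kz‖² ≤ ‖K‖ ⬝ re(z* K z)`. -/
lemma norm_mulVec_sq_le {K : Matrix n n ℂ} (hK : K.PosSemidef) (z : n → ℂ) :
    ‖(WithLp.equiv 2 (n → ℂ)).symm (K *ᵥ z)‖ ^ 2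
      ≤ ‖K‖ * RCLike.re (star z ⬝ᵥ (K *ᵥ z)) := by
  set R := CFC.sqrt K with hR
  have hRH : Rᴴ = R := (Matrix.nonneg_iff_posSemidef.mp (CFC.sqrt_nonneg K)).1
  have hRR : R * R = K := CFC.sqrt_mul_sqrt_self K (Matrix.nonneg_iff_posSemidef.mpr hK)
  have hKz : R *ᵥ (R *ᵥ z) = K *ᵥ z := by rw [mulVec_mulVec, hRR]
  have h1 : ‖(WithLp.equiv 2 (n → ℂ)).symm (K *ᵥ z)‖
      ≤ ‖R‖ * ‖(WithLp.equiv 2 (n → ℂ)).symm (R *ᵥ z)‖ := by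
    have h := R.l2_opNorm_mulVec ((WithLp.equiv 2 (n → ℂ)).symm (R *ᵥ z))
    refine le_trans (le_of_eq ?_) h
    rw [← hKz]; rfl
  have h2 : ‖(WithLp.equiv 2 (n → ℂ)).symm (R *ᵥ z)‖ ^ 2
      = RCLike.re (star z ⬝ᵥ (K *ᵥ z)) := by
    rw [← inner_self_eq_norm_sq (𝕜 := ℂ)]
    congr 1
    have h3 : (inner ℂ ((WithLp.equiv 2 (n → ℂ)).symm (R *ᵥ z))
        ((WithLp.equiv 2 (n → ℂ)).symm (R *ᵥ z))) = star (R *ᵥ z) ⬝ᵥ (R *ᵥ z) := by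
      rw [dotProduct_comm]; exact EuclideanSpace.inner_toLp_toLp _ _
    rw [h3, star_mulVec_dot, hRH, hKz]
  have hRnorm : ‖R‖ * ‖R‖ = ‖K‖ := by
    rw [← Matrix.l2_opNorm_conjTranspose_mul_self R, hRH, hRR]
  calc ‖(WithLp.equiv 2 (n → ℂ)).symm (K *ᵥ z)‖ ^ 2
      ≤ (‖R‖ * ‖(WithLp.equiv 2 (n → ℂ)).symm (R *ᵥ z)‖) ^ 2 := by
        apply pow_le_pow_left₀ (norm_nonneg _) h1
    _ = (‖R‖ * ‖R‖) * ‖(WithLp.equiv 2 (n → ℂ)).symm (R *ᵥ z)‖ ^ 2 := by ring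
    _ = ‖K‖ * RCLike.re (star z ⬝ᵥ (K *ᵥ z)) := by rw [hRnorm, h2]

/-- For a posdef `H`, `‖y‖² ≤ ‖H⁻¹‖ ⬝ re(y* H y)`. -/
lemma norm_sq_le_posDef_inv {H : Matrix n n ℂ} (hH : H.PosDef) (y : n → ℂ) :
    ‖(WithLp.equiv 2 (n → ℂ)).symm y‖ ^ 2 ≤ ‖H⁻¹‖ * RCLike.re (star y ⬝ᵥ (H *ᵥ y)) := by
  have h := norm_mulVec_sq_le hH.inv.posSemidef (H *ᵥ y)
  have e1 : H⁻¹ *ᵥ (H *ᵥ y) = y := by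
    rw [mulVec_mulVec, Matrix.nonsing_inv_mul _ ((Matrix.isUnit_iff_isUnit_det H).mp hH.isUnit),
      Matrix.one_mulVec]
  rw [e1] at h
  have e2 : star (H *ᵥ y) ⬝ᵥ y = star y ⬝ᵥ (H *ᵥ y) := by
    rw [star_mulVec_dot, hH.1.eq]
  rwa [e2] at h

end MinorAux

set_option maxHeartbeats 1000000 in
/-- If `Re A = (A + Aᴴ)/2` is positive definite and `U_k` has orthonormal columns, then
`‖A⁻¹ U_k (U_kᴴ A⁻¹ U_k)⁻¹ U_kᴴ A⁻¹‖ ≤ ‖(Re A)⁻¹‖` in operator norm. -/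
theorem minor_resolvent_norm_bound
    {N k : ℕ}
    (A : Matrix (Fin N) (Fin N) ℂ)
    (hRe : ((1 / 2 : ℂ) • (A + Aᴴ)).PosDef)
    (Uk : Matrix (Fin N) (Fin k) ℂ)
    (hUk : Ukᴴ * Uk = 1) :
    ‖A⁻¹ * Uk * (Ukᴴ * A⁻¹ * Uk)⁻¹ * Ukᴴ * A⁻¹‖
      ≤ ‖((1 / 2 : ℂ) • (A + Aᴴ))⁻¹‖ := by
  classical
  set H : Matrix (Fin N) (Fin N) ℂ := (1 / 2 : ℂ) • (A + Aᴴ) with hHdef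
  set B : Matrix (Fin N) (Fin N) ℂ := A⁻¹ with hBdef
  have hA : IsUnit A := MinorAux.isUnit_of_posDef_re hRe
  have hAdet : IsUnit A.det := (Matrix.isUnit_iff_isUnit_det A).mp hA
  have hBA : B * A = 1 := Matrix.nonsing_inv_mul A hAdet
  have hAB : A * B = 1 := Matrix.mul_nonsing_inv A hAdet
  have hABt : Aᴴ * Bᴴ = 1 := by rw [← conjTranspose_mul, hBA, conjTranspose_one]
  have hBAt : Bᴴ * Aᴴ = 1 := by rw [← conjTranspose_mul, hAB, conjTranspose_one]
  have hBt : IsUnit Bᴴ := ⟨⟨Bᴴ, Aᴴ, hBAt, hABt⟩, rfl⟩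
  -- C := Re(A⁻¹)
  set C : Matrix (Fin N) (Fin N) ℂ := B * H * Bᴴ with hCdef
  have e1 : C = (1 / 2 : ℂ) • (Bᴴ + B) := by
    rw [hCdef, hHdef, Matrix.mul_smul, Matrix.smul_mul]
    congr 1
    rw [Matrix.mul_add, Matrix.add_mul, hBA, Matrix.one_mul, Matrix.mul_assoc, hABt,
      Matrix.mul_one]
  have e2 : Bᴴ * H * B = C := by
    rw [e1, hHdef, Matrix.mul_smul, Matrix.smul_mul]
    congr 1
    rw [Matrix.mul_add, Matrix.add_mul, Matrix.mul_assoc, hAB, Matrix.mul_one, hBAt,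
      Matrix.one_mul, add_comm]
  have hC : C.PosDef := by
    have h := MinorAux.posDef_conj hRe Bᴴ (MinorAux.mulVec_eq_zero_of_isUnit hBt)
    rw [conjTranspose_conjTranspose] at h
    exact h
  -- columns of Uk are independent
  have hUinj : ∀ x : Fin k → ℂ, Uk *ᵥ x = 0 → x = 0 := by
    intro x hx
    have h : (Ukᴴ * Uk) *ᵥ x = 0 := by rw [← mulVec_mulVec, hx, Matrix.mulVec_zero]
    rwa [hUk, Matrix.one_mulVec] at h
  -- S and its invertibility
  set S : Matrix (Fin k) (Fin k) ℂ := Ukᴴ * B * Uk with hSdef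
  have hSH : Sᴴ = Ukᴴ * Bᴴ * Uk := by
    rw [hSdef, conjTranspose_mul, conjTranspose_mul, conjTranspose_conjTranspose,
      Matrix.mul_assoc]
  have hReS : ((1 / 2 : ℂ) • (S + Sᴴ)).PosDef := by
    have hre : (1 / 2 : ℂ) • (S + Sᴴ) = Ukᴴ * C * Uk := by
      rw [e1, Matrix.mul_smul, Matrix.smul_mul]
      congr 1
      rw [Matrix.mul_add, Matrix.add_mul, ← hSH, hSdef, add_comm]
    rw [hre]
    exact MinorAux.posDef_conj hC Uk hUinj
  have hS : IsUnit S := MinorAux.isUnit_of_posDef_re hReS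
  have hSdet : IsUnit S.det := (Matrix.isUnit_iff_isUnit_det S).mp hS
  have hSinv : S * S⁻¹ = 1 := Matrix.mul_nonsing_inv S hSdet
  -- the operator norm bound, via vectors
  have main : ∀ x : Fin N → ℂ,
      ‖(WithLp.equiv 2 (Fin N → ℂ)).symm ((B * Uk * S⁻¹ * Ukᴴ * B) *ᵥ x)‖
        ≤ ‖H⁻¹‖ * ‖(WithLp.equiv 2 (Fin N → ℂ)).symm x‖ := by
    intro x
    set u : Fin k → ℂ := Ukᴴ *ᵥ (B *ᵥ x) with hu
    set v : Fin k → ℂ := S⁻¹ *ᵥ u with hv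
    set w : Fin N → ℂ := Uk *ᵥ v with hw
    have hMx : (B * Uk * S⁻¹ * Ukᴴ * B) *ᵥ x = B *ᵥ w := by
      rw [hw, hv, hu]
      simp only [mulVec_mulVec, Matrix.mul_assoc]
    set q : ℝ := RCLike.re (star w ⬝ᵥ (C *ᵥ w)) with hq
    have hq0 : 0 ≤ q := hC.posSemidef.re_dotProduct_nonneg w
    set KK : ℝ := ‖H⁻¹‖ with hKK
    have hK0 : (0 : ℝ) ≤ KK := norm_nonneg _
    -- step 1 : ‖Bw‖² ≤ K q
    have h1 : ‖(WithLp.equiv 2 (Fin N → ℂ)).symm (B *ᵥ w)‖ ^ 2 ≤ KK * q := by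
      have h := MinorAux.norm_sq_le_posDef_inv hRe (B *ᵥ w)
      have hform : star (B *ᵥ w) ⬝ᵥ (H *ᵥ (B *ᵥ w)) = star w ⬝ᵥ (C *ᵥ w) := by
        rw [MinorAux.star_mulVec_dot, mulVec_mulVec, mulVec_mulVec, e2]
      rw [hform] at h
      exact h
    -- step 3 : ‖Bᴴw‖² ≤ K q
    have h3 : ‖(WithLp.equiv 2 (Fin N → ℂ)).symm (Bᴴ *ᵥ w)‖ ^ 2 ≤ KK * q := by
      have h := MinorAux.norm_sq_le_posDef_inv hRe (Bᴴ *ᵥ w)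
      have hform : star (Bᴴ *ᵥ w) ⬝ᵥ (H *ᵥ (Bᴴ *ᵥ w)) = star w ⬝ᵥ (C *ᵥ w) := by
        rw [MinorAux.star_mulVec_dot, conjTranspose_conjTranspose, mulVec_mulVec,
          mulVec_mulVec, ← hCdef]
      rw [hform] at h
      exact h
    -- the two dot-product identities
    have hSv : S *ᵥ v = u := by rw [hv, mulVec_mulVec, hSinv, Matrix.one_mulVec]
    have key1 : star w ⬝ᵥ (B *ᵥ w) = star v ⬝ᵥ u := by
      conv_lhs => rw [hw]
      rw [MinorAux.star_mulVec_dot, mulVec_mulVec, mulVec_mulVec, ← hSdef, hSv]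
    have key2 : star w ⬝ᵥ (B *ᵥ x) = star v ⬝ᵥ u := by
      conv_lhs => rw [hw]
      rw [MinorAux.star_mulVec_dot, ← hu]
    -- q = re (w* B w)
    have hqB : q = RCLike.re (star w ⬝ᵥ (B *ᵥ w)) := by
      rw [hq, e1]
      have hsplit : star w ⬝ᵥ (((1 / 2 : ℂ) • (Bᴴ + B)) *ᵥ w)
          = (1 / 2 : ℂ) * (star w ⬝ᵥ (Bᴴ *ᵥ w) + star w ⬝ᵥ (B *ᵥ w)) := by
        rw [smul_mulVec, dotProduct_smul, add_mulVec, dotProduct_add, smul_eq_mul]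
      rw [hsplit]
      have hconj : star w ⬝ᵥ (Bᴴ *ᵥ w) = star (star w ⬝ᵥ (B *ᵥ w)) := by
        rw [Matrix.star_dotProduct, MinorAux.star_mulVec_dot, conjTranspose_conjTranspose]
      rw [hconj]
      set c : ℂ := star w ⬝ᵥ (B *ᵥ w) with hc
      rw [Complex.star_def, add_comm, Complex.add_conj]
      have h2c : (1 / 2 : ℂ) * ((2 * c.re : ℝ) : ℂ) = (c.re : ℂ) := by push_cast; ring
      rw [h2c]
      simp
    have hqx : q = RCLike.re (star (Bᴴ *ᵥ w) ⬝ᵥ x) := by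
      have hrhs : star (Bᴴ *ᵥ w) ⬝ᵥ x = star w ⬝ᵥ (B *ᵥ x) := by
        rw [MinorAux.star_mulVec_dot, conjTranspose_conjTranspose]
      rw [hqB, hrhs, key2, key1]
    have h2 : q ≤ ‖(WithLp.equiv 2 (Fin N → ℂ)).symm (Bᴴ *ᵥ w)‖
        * ‖(WithLp.equiv 2 (Fin N → ℂ)).symm x‖ := by
      rw [hqx]
      have hinner : (inner ℂ ((WithLp.equiv 2 (Fin N → ℂ)).symm (Bᴴ *ᵥ w))
          ((WithLp.equiv 2 (Fin N → ℂ)).symm x)) = star (Bᴴ *ᵥ w) ⬝ᵥ x := by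
        rw [dotProduct_comm]; exact EuclideanSpace.inner_toLp_toLp _ _
      rw [← hinner]
      exact re_inner_le_norm _ _
    -- combine: q ≤ K ‖x‖²
    set a : ℝ := ‖(WithLp.equiv 2 (Fin N → ℂ)).symm x‖ with ha
    set b : ℝ := ‖(WithLp.equiv 2 (Fin N → ℂ)).symm (Bᴴ *ᵥ w)‖ with hb
    have ha0 : 0 ≤ a := norm_nonneg _
    have hb0 : 0 ≤ b := norm_nonneg _
    have hqK : q ≤ KK * a ^ 2 := by
      rcases eq_or_lt_of_le hq0 with hq' | hq'
      · rw [← hq']; positivity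
      · have hsq : q * q ≤ (KK * a ^ 2) * q := by
          nlinarith [mul_le_mul h2 h2 hq0 (mul_nonneg hb0 ha0),
            mul_le_mul_of_nonneg_left h3 (sq_nonneg a)]
        exact le_of_mul_le_mul_right hsq hq'
    rw [hMx]
    have hfin : ‖(WithLp.equiv 2 (Fin N → ℂ)).symm (B *ᵥ w)‖ ^ 2 ≤ (KK * a) ^ 2 := by
      calc ‖(WithLp.equiv 2 (Fin N → ℂ)).symm (B *ᵥ w)‖ ^ 2 ≤ KK * q := h1
        _ ≤ KK * (KK * a ^ 2) := by nlinarith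
        _ = (KK * a) ^ 2 := by ring
    exact le_of_pow_le_pow_left₀ (n := 2) two_ne_zero (mul_nonneg hK0 ha0) hfin
  -- conclude
  rw [Matrix.l2_opNorm_def]
  refine ContinuousLinearMap.opNorm_le_bound _ (norm_nonneg _) fun x => ?_
  exact main ((WithLp.equiv 2 (Fin N → ℂ)) x)
end

section
/- Let $A$ be a positive semi-definite Hermitian block matrix with diagonal blocks $A_{11},\dots,A_{mm}$ (square blocks). Then $\det A \le \prod_{n=1}^m \det A_{nn}$ (Fischer's inequality). -/
open Matrix
open scoped ComplexOrder

lemma my_det_nonneg {n : Type*} [Fintype n] [DecidableEq n] {A : Matrix n n ℂ}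
    (hA : A.PosSemidef) : 0 ≤ A.det := by
  rw [hA.isHermitian.det_eq_prod_eigenvalues, ← RCLike.ofReal_prod]
  exact RCLike.ofReal_nonneg.mpr <| Finset.prod_nonneg fun i _ => hA.eigenvalues_nonneg i

lemma my_posDef {n : Type*} [Fintype n] [DecidableEq n] {A : Matrix n n ℂ}
    (hA : A.PosSemidef) (hd : A.det ≠ 0) : A.PosDef := by
  refine posDef_iff_dotProduct_mulVec.mpr ⟨hA.1, fun x hx => ?_⟩
  rcases lt_or_eq_of_le (hA.dotProduct_mulVec_nonneg x) with h | h
  · exact h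
  · exact absurd (Matrix.exists_mulVec_eq_zero_iff.mp
      ⟨x, hx, hA.dotProduct_mulVec_zero_iff x |>.mp h.symm⟩) hd

lemma my_one_le_det {n : Type*} [Fintype n] [DecidableEq n] {M : Matrix n n ℂ}
    (hM : M.PosSemidef) : 1 ≤ (1 + M).det := by
  have hH := hM.isHermitian
  have hst := hH.spectral_theorem
  set U : Matrix n n ℂ := (hH.eigenvectorUnitary : Matrix n n ℂ)
  have hU : U ∈ Matrix.unitaryGroup n ℂ := hH.eigenvectorUnitary.2
  have h1 : (1 : Matrix n n ℂ) = U * 1 * star U := by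
    rw [mul_one, (Matrix.mem_unitaryGroup_iff.mp hU)]
  have : 1 + M = U * (1 + diagonal (RCLike.ofReal ∘ hH.eigenvalues)) * star U := by
    rw [mul_add, add_mul, ← h1]
    exact congrArg (1 + ·) (hst.trans (Unitary.conjStarAlgAut_apply _ _))
  rw [this, det_mul, det_mul, mul_comm, ← mul_assoc, ← det_mul,
    (Matrix.mem_unitaryGroup_iff'.mp hU), det_one, one_mul]
  have hd : (1 : Matrix n n ℂ) + diagonal (RCLike.ofReal ∘ hH.eigenvalues)
      = diagonal (fun i => ((1 + hH.eigenvalues i : ℝ) : ℂ)) := by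
    rw [← diagonal_one, diagonal_add]
    funext i
    push_cast
    rfl
  rw [hd, det_diagonal, ← Complex.ofReal_prod]
  have h2 : (1 : ℝ) ≤ ∏ i, (1 + hH.eigenvalues i) := by
    calc (1 : ℝ) = ∏ _i : n, (1 : ℝ) := by simp
      _ ≤ ∏ i, (1 + hH.eigenvalues i) :=
        Finset.prod_le_prod (fun i _ => zero_le_one)
          (fun i _ => by linarith [hM.eigenvalues_nonneg i])
  calc (1 : ℂ) = ((1 : ℝ) : ℂ) := by norm_num
    _ ≤ _ := Complex.real_le_real.mpr h2

lemma my_det_mono {n : Type*} [Fintype n] [DecidableEq n] {X Y : Matrix n n ℂ}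
    (hX : X.PosSemidef) (hY : Y.PosSemidef) : X.det ≤ (X + Y).det := by
  by_cases hd : X.det = 0
  · rw [hd]; exact my_det_nonneg (hX.add hY)
  · -- X is PD; use sqrt
    obtain ⟨R, hR, hRR⟩ : ∃ R : Matrix n n ℂ, R.PosSemidef ∧ R * R = X := by
      open scoped MatrixOrder in
      exact ⟨CFC.sqrt X, (CFC.sqrt_nonneg X).posSemidef, CFC.sqrt_mul_sqrt_self X hX.nonneg⟩
    have hRdet : R.det ≠ 0 := fun h => hd (by rw [← hRR, det_mul, h, zero_mul])
    have hRunit : IsUnit R.det := Ne.isUnit hRdet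
    have hRinv : R * R⁻¹ = 1 := mul_nonsing_inv R hRunit
    have hRinv' : R⁻¹ * R = 1 := nonsing_inv_mul R hRunit
    have hM : (R⁻¹ * Y * R⁻¹).PosSemidef := by
      have := hY.mul_mul_conjTranspose_same R⁻¹
      rwa [(hR.isHermitian.inv).eq] at this
    have key : X + Y = R * (1 + R⁻¹ * Y * R⁻¹) * R := by
      rw [mul_add, add_mul, mul_one, hRR]
      congr 1
      symm
      calc R * (R⁻¹ * Y * R⁻¹) * R = (R * R⁻¹) * Y * (R⁻¹ * R) := by
              simp only [mul_assoc]
        _ = Y := by rw [hRinv, hRinv', one_mul, mul_one]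
    rw [key, det_mul, det_mul, mul_comm, ← mul_assoc, ← det_mul, hRR]
    calc X.det = X.det * 1 := (mul_one _).symm
      _ ≤ X.det * (1 + R⁻¹ * Y * R⁻¹).det :=
        mul_le_mul_of_nonneg_left (my_one_le_det hM) (my_det_nonneg hX)

lemma my_fischer_two {l r : Type*} [Fintype l] [DecidableEq l] [Fintype r] [DecidableEq r]
    {M : Matrix (l ⊕ r) (l ⊕ r) ℂ} (hM : M.PosSemidef) :
    M.det ≤ (M.toBlocks₁₁).det * (M.toBlocks₂₂).det := by
  set A := M.toBlocks₁₁ with hA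
  set B := M.toBlocks₁₂ with hB
  set D := M.toBlocks₂₂ with hD
  have hC : M.toBlocks₂₁ = Bᴴ := by
    ext i j
    have := congrFun (congrFun hM.isHermitian.eq (Sum.inr i)) (Sum.inl j)
    simpa [conjTranspose_apply, hB, toBlocks₂₁, toBlocks₁₂] using this.symm
  have hMblocks : M = fromBlocks A B Bᴴ D := by
    rw [← hC, hA, hB, hD, fromBlocks_toBlocks]
  have hApsd : A.PosSemidef := hM.submatrix Sum.inl
  have hDpsd : D.PosSemidef := hM.submatrix Sum.inr
  by_cases hd : A.det = 0
  · -- M is singular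
    obtain ⟨x, hx, hAx⟩ := (Matrix.exists_mulVec_eq_zero_iff).mpr hd
    have hv : (Sum.elim x 0 : l ⊕ r → ℂ) ≠ 0 := by
      intro h
      apply hx
      ext i
      exact congrFun h (Sum.inl i)
    have hq : dotProduct (star (Sum.elim x 0)) (M *ᵥ Sum.elim x 0) = 0 := by
      rw [hMblocks]
      have : (fromBlocks A B Bᴴ D) *ᵥ (Sum.elim x 0) = Sum.elim (A *ᵥ x) (Bᴴ *ᵥ x) := by
        rw [show (Sum.elim x 0 : l ⊕ r → ℂ) = Sum.elim x 0 from rfl]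
        ext (i | i) <;> simp [fromBlocks_mulVec, Sum.elim]
      rw [this, hAx]
      simp [dotProduct, Fintype.sum_sum_type]
    have hMv : M *ᵥ Sum.elim x 0 = 0 := (hM.dotProduct_mulVec_zero_iff _).mp hq
    have : M.det = 0 := Matrix.exists_mulVec_eq_zero_iff.mp ⟨_, hv, hMv⟩
    rw [this, hd, zero_mul]
  · -- A is positive definite
    have hApd : A.PosDef := my_posDef hApsd hd
    have : Invertible A := invertibleOfIsUnitDet A (Ne.isUnit hd)
    have hdetM : M.det = A.det * (D - Bᴴ * A⁻¹ * B).det := by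
      rw [hMblocks, det_fromBlocks₁₁, invOf_eq_nonsing_inv]
    have hSpsd : (D - Bᴴ * A⁻¹ * B).PosSemidef :=
      (PosDef.fromBlocks₁₁ B D hApd).mp (hMblocks ▸ hM)
    have hPpsd : (Bᴴ * A⁻¹ * B).PosSemidef :=
      hApsd.inv.conjTranspose_mul_mul_same B
    have hle : (D - Bᴴ * A⁻¹ * B).det ≤ D.det := by
      have := my_det_mono hSpsd hPpsd
      rwa [sub_add_cancel] at this
    rw [hdetM]
    exact mul_le_mul_of_nonneg_left hle (my_det_nonneg hApsd)

def mySigmaEquiv {m : ℕ} (n : Fin (m + 1) → ℕ) :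
    ((i : Fin (m + 1)) × Fin (n i)) ≃ (Fin (n 0) ⊕ ((i : Fin m) × Fin (n i.succ))) where
  toFun x := Fin.cases (motive := fun i => Fin (n i) → (Fin (n 0) ⊕ ((i : Fin m) × Fin (n i.succ))))
    (fun j => Sum.inl j) (fun i j => Sum.inr ⟨i, j⟩) x.1 x.2
  invFun := Sum.elim (fun j => ⟨0, j⟩) (fun p => ⟨p.1.succ, p.2⟩)
  left_inv := by
    rintro ⟨i, j⟩
    induction i using Fin.cases <;> rfl
  right_inv := by rintro (j | ⟨i, j⟩) <;> rfl

theorem my_fischer : ∀ (m : ℕ) (n : Fin m → ℕ)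
    (A : Matrix ((i : Fin m) × Fin (n i)) ((i : Fin m) × Fin (n i)) ℂ),
    A.PosSemidef →
    A.det ≤ ∏ i : Fin m,
      (A.submatrix (fun j : Fin (n i) => (⟨i, j⟩ : (i : Fin m) × Fin (n i)))
        (fun j : Fin (n i) => (⟨i, j⟩ : (i : Fin m) × Fin (n i)))).det := by
  intro m
  induction m with
  | zero => intro n A hA; simp [det_isEmpty]
  | succ m ih =>
    intro n A hA
    set e := mySigmaEquiv n
    set M := A.submatrix e.symm e.symm with hMdef
    have hMpsd : M.PosSemidef := hA.submatrix e.symm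
    have hdet : A.det = M.det := (det_submatrix_equiv_self e.symm A).symm
    have h2 := my_fischer_two hMpsd
    have hB11 : M.toBlocks₁₁ =
        A.submatrix (fun j : Fin (n 0) => (⟨0, j⟩ : (i : Fin (m+1)) × Fin (n i)))
          (fun j : Fin (n 0) => (⟨0, j⟩ : (i : Fin (m+1)) × Fin (n i))) := rfl
    have hB22 : M.toBlocks₂₂ =
        A.submatrix (fun p : (i : Fin m) × Fin (n i.succ) => (⟨p.1.succ, p.2⟩ : (i : Fin (m+1)) × Fin (n i)))
          (fun p => ⟨p.1.succ, p.2⟩) := rfl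
    have hrest := ih (fun i => n i.succ)
      (A.submatrix (fun p : (i : Fin m) × Fin (n i.succ) => (⟨p.1.succ, p.2⟩ : (i : Fin (m+1)) × Fin (n i)))
        (fun p => ⟨p.1.succ, p.2⟩))
      (hA.submatrix _)
    rw [hdet, Fin.prod_univ_succ]
    refine le_trans h2 ?_
    rw [hB11, hB22]
    refine mul_le_mul_of_nonneg_left ?_ (my_det_nonneg (hA.submatrix _))
    refine le_trans hrest ?_
    apply le_of_eq
    rfl

/-- Fischer's inequality: for a positive semidefinite Hermitian block matrix `A`
(blocks indexed by `i : Fin m`, the `i`-th diagonal block being square of size `n i`),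
the determinant of `A` is at most the product of the determinants of the diagonal blocks. -/

theorem fischer_inequality
    {m : ℕ} {n : Fin m → ℕ}
    (A : Matrix ((i : Fin m) × Fin (n i)) ((i : Fin m) × Fin (n i)) ℂ)
    (hA : A.PosSemidef) :
    A.det ≤ ∏ i : Fin m,
      (A.submatrix (fun j : Fin (n i) => (⟨i, j⟩ : (i : Fin m) × Fin (n i)))
        (fun j : Fin (n i) => (⟨i, j⟩ : (i : Fin m) × Fin (n i)))).det := by
  exact my_fischer m n A hA
end

section
/- Let $D$ be an $N\times N$ complex matrix with $\|D\| < 1$. Then $\det(1-D) = \exp\Big\{-\sum_{m=1}^{n-1}\frac{1}{m}\mathrm{tr}\,D^m - \int_0^1 x^{n-1}\,\mathrm{tr}\big(D^n (1-xD)^{-1}\big)\,dx\Big\}$ for every integer $n\ge 1$. -/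
open Matrix Finset
open scoped Matrix.Norms.L2Operator

section Aux

open Polynomial

variable {N : ℕ}

/-- Finite geometric expansion of the matrix inverse `(1-A)⁻¹`. -/
private lemma aux_inv_geom (A : Matrix (Fin N) (Fin N) ℂ) (hA : IsUnit (1 - A)) (m : ℕ) :
    (1 - A)⁻¹ = (∑ k ∈ range m, A ^ k) + A ^ m * (1 - A)⁻¹ := by
  have hd : IsUnit (1 - A).det := (Matrix.isUnit_iff_isUnit_det _).mp hA
  have hc : Commute (1 - A) (A ^ m) :=
    ((Commute.one_left (A ^ m)).sub_left (((Commute.refl A).pow_right m)))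
  have hgeom : (1 - A) * (∑ k ∈ range m, A ^ k) = 1 - A ^ m := by
    have hgm := geom_sum_mul A m
    have hc2 : (∑ k ∈ range m, A ^ k) * (A - 1) = (A - 1) * (∑ k ∈ range m, A ^ k) := by
      refine Commute.symm ?_ |>.eq
      exact Commute.sum_right _ _ _ fun k _ =>
        ((Commute.refl A).sub_left (Commute.one_left A)).pow_right k
    calc (1 - A) * (∑ k ∈ range m, A ^ k)
        = -((A - 1) * (∑ k ∈ range m, A ^ k)) := by noncomm_ring
      _ = -(A ^ m - 1) := by rw [← hc2, hgm]
      _ = 1 - A ^ m := by noncomm_ring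
  have h1 : (1 - A) * ((∑ k ∈ range m, A ^ k) + A ^ m * (1 - A)⁻¹) = 1 := by
    rw [mul_add, hgeom, ← mul_assoc, hc.eq, mul_assoc, Matrix.mul_nonsing_inv _ hd, mul_one]
    noncomm_ring
  calc (1 - A)⁻¹
      = (1 - A)⁻¹ * ((1 - A) * ((∑ k ∈ range m, A ^ k) + A ^ m * (1 - A)⁻¹)) := by
        rw [h1, mul_one]
    _ = ((1 - A)⁻¹ * (1 - A)) * ((∑ k ∈ range m, A ^ k) + A ^ m * (1 - A)⁻¹) := by
        rw [mul_assoc]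
    _ = _ := by rw [Matrix.nonsing_inv_mul _ hd, one_mul]

/-- Key trace identity splitting `tr (D (1-xD)⁻¹)` into a finite sum plus remainder. -/
private lemma aux_trace_identity (D : Matrix (Fin N) (Fin N) ℂ) (x : ℂ)
    (hA : IsUnit (1 - x • D)) {n : ℕ} (hn : 1 ≤ n) :
    (D * (1 - x • D)⁻¹).trace
      = (∑ m ∈ Ico 1 n, x ^ (m - 1) * (D ^ m).trace)
        + x ^ (n - 1) * (D ^ n * (1 - x • D)⁻¹).trace := by
  obtain ⟨p, rfl⟩ : ∃ p, n = p + 1 := ⟨n - 1, (Nat.succ_pred_eq_of_pos hn).symm⟩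
  have key := aux_inv_geom (x • D) hA p
  have expand : D * (1 - x • D)⁻¹
      = (∑ k ∈ range p, x ^ k • D ^ (k + 1)) + x ^ p • (D ^ (p + 1) * (1 - x • D)⁻¹) := by
    calc D * (1 - x • D)⁻¹
        = D * ((∑ k ∈ range p, (x • D) ^ k) + (x • D) ^ p * (1 - x • D)⁻¹) := by rw [← key]
      _ = (∑ k ∈ range p, D * (x • D) ^ k) + D * ((x • D) ^ p * (1 - x • D)⁻¹) := by
          rw [mul_add, Finset.mul_sum]
      _ = _ := by
          congr 1
          · refine Finset.sum_congr rfl fun k _ => ?_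
            rw [_root_.smul_pow, mul_smul_comm, ← pow_succ']
          · rw [_root_.smul_pow, smul_mul_assoc, mul_smul_comm, ← mul_assoc, ← pow_succ']
  rw [expand]
  rw [Matrix.trace_add, Matrix.trace_sum]
  simp only [Matrix.trace_smul, smul_eq_mul]
  congr 1
  rw [Finset.sum_Ico_eq_sum_range]
  simp only [Nat.add_sub_cancel, add_tsub_cancel_left]
  refine Finset.sum_congr rfl fun k _ => by rw [add_comm 1 k]

/-- Jacobi's formula for the one-parameter family `x ↦ det (1 - x D)`. -/
private lemma aux_det_hasDerivAt (D : Matrix (Fin N) (Fin N) ℂ) (x₀ : ℝ)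
    (h : IsUnit (1 - (x₀ : ℂ) • D)) :
    HasDerivAt (fun x : ℝ => (1 - (x : ℂ) • D).det)
      (-((1 - (x₀ : ℂ) • D).det * (D * (1 - (x₀ : ℂ) • D)⁻¹).trace)) x₀ := by
  set A₀ := 1 - (x₀ : ℂ) • D with hA₀
  have hd : IsUnit A₀.det := (Matrix.isUnit_iff_isUnit_det _).mp h
  set B := A₀⁻¹ * D with hB
  have key : ∀ c : ℂ, (1 - ((x₀ : ℂ) + c) • D) = A₀ * (1 + c • (-B)) := by
    intro c
    have h2 : A₀ * (A₀⁻¹ * D) = D := by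
      rw [← mul_assoc, Matrix.mul_nonsing_inv _ hd, one_mul]
    rw [mul_add, mul_one, mul_smul_comm, hB, Matrix.mul_neg, h2, hA₀, add_smul, smul_neg]
    noncomm_ring
  set t := (-B).trace with ht
  set Q := (1 + (X : ℂ[X]) • (-B).map C).det.divX.divX with hQ
  set φ : ℂ → ℂ := fun c => 1 + t * c + Q.eval c * c ^ 2 with hφdef
  have hφ : ∀ c : ℂ, (1 + c • (-B)).det = φ c := fun c => Matrix.det_one_add_smul c (-B)
  have hφ' : HasDerivAt φ t 0 := by
    have h1 : HasDerivAt (fun c : ℂ => 1 + t * c) t 0 := by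
      simpa using (hasDerivAt_id (0:ℂ)).const_mul t |>.const_add 1
    have h2 : HasDerivAt (fun c : ℂ => Q.eval c * c ^ 2)
        (Q.derivative.eval 0 * 0 ^ 2 + Q.eval 0 * (2 * 0 ^ 1)) 0 :=
      (Q.hasDerivAt 0).mul (hasDerivAt_pow 2 0)
    have := h1.add h2
    refine this.congr_deriv ?_
    simp
  have hψ : HasDerivAt (fun z : ℂ => A₀.det * φ (z - (x₀ : ℂ)))
      (A₀.det * t) (x₀ : ℂ) := by
    have inner : HasDerivAt (fun z : ℂ => z - (x₀ : ℂ)) 1 (x₀ : ℂ) :=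
      (hasDerivAt_id _).sub_const _
    have hcomp : HasDerivAt (φ ∘ fun z : ℂ => z - (x₀ : ℂ)) (t * 1) (x₀ : ℂ) :=
      HasDerivAt.comp _ (by simpa using hφ') inner
    simpa [Function.comp] using hcomp.const_mul A₀.det
  have hreal : HasDerivAt (fun x : ℝ => A₀.det * φ ((x : ℂ) - (x₀ : ℂ)))
      (A₀.det * t) x₀ := hψ.comp_ofReal
  have feq : (fun x : ℝ => (1 - (x : ℂ) • D).det)
      = fun x : ℝ => A₀.det * φ ((x : ℂ) - (x₀ : ℂ)) := by
    funext x
    have hx : (x : ℂ) = (x₀ : ℂ) + ((x : ℂ) - (x₀ : ℂ)) := by ring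
    rw [← hφ, ← Matrix.det_mul, ← key ((x : ℂ) - (x₀ : ℂ)), ← hx]
  rw [feq]
  convert hreal using 1
  rw [ht, Matrix.trace_neg, hB, Matrix.trace_mul_comm]
  ring

private lemma aux_inv_continuousAt (D : Matrix (Fin N) (Fin N) ℂ) (x₀ : ℝ)
    (h : ‖(x₀ : ℂ) • D‖ < 1) :
    ContinuousAt (fun x : ℝ => (1 - (x : ℂ) • D)⁻¹) x₀ := by
  have heq : (fun x : ℝ => (1 - (x : ℂ) • D)⁻¹)
      = (fun M : Matrix (Fin N) (Fin N) ℂ => Ring.inverse M)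
          ∘ (fun x : ℝ => 1 - (x : ℂ) • D) := by
    funext x; simp [Matrix.nonsing_inv_eq_ringInverse]
  rw [heq]
  have hcont : Continuous (fun x : ℝ => 1 - (x : ℂ) • D) :=
    continuous_const.sub (Complex.continuous_ofReal.smul continuous_const)
  refine ContinuousAt.comp ?_ hcont.continuousAt
  have hc := NormedRing.inverse_continuousAt (Units.oneSub ((x₀ : ℂ) • D) h)
  rwa [Units.val_oneSub] at hc

private lemma aux_traceL_continuous (A : Matrix (Fin N) (Fin N) ℂ) :
    Continuous (fun M : Matrix (Fin N) (Fin N) ℂ => (A * M).trace) := by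
  have heq : (fun M : Matrix (Fin N) (Fin N) ℂ => (A * M).trace)
      = ((Matrix.traceLinearMap (Fin N) ℂ ℂ).comp (LinearMap.mulLeft ℂ A) : _ →ₗ[ℂ] ℂ) := rfl
  rw [heq]
  exact LinearMap.continuous_of_finiteDimensional _

end Aux

set_option maxHeartbeats 1000000

/-- Log-determinant expansion with integral remainder: for `‖D‖ < 1` and `n ≥ 1`,
`det(1-D) = exp(-∑_{m=1}^{n-1} tr(Dᵐ)/m - ∫₀¹ x^{n-1} tr(Dⁿ (1-xD)⁻¹) dx)`. -/
theorem det_one_sub_eq_exp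
    {N : ℕ} (D : Matrix (Fin N) (Fin N) ℂ) (hD : ‖D‖ < 1)
    (n : ℕ) (hn : 1 ≤ n) :
    (1 - D).det
      = Complex.exp
          (-(∑ m ∈ Ico 1 n, (1 / (m : ℂ)) * (D ^ m).trace)
            - ∫ x in (0 : ℝ)..1,
                (x : ℂ) ^ (n - 1) * (D ^ n * (1 - (x : ℂ) • D)⁻¹).trace) := by
  classical
  set g : ℝ → ℂ := fun t => (t : ℂ) ^ (n - 1) * (D ^ n * (1 - (t : ℂ) • D)⁻¹).trace with hgdef
  set S : Set ℝ := {x : ℝ | ‖(x : ℂ) • D‖ < 1} with hSdef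
  have hnorm : ∀ x : ℝ, ‖(x : ℂ) • D‖ = |x| * ‖D‖ := fun x => by
    rw [norm_smul, Complex.norm_real, Real.norm_eq_abs]
  have hIccS : Set.Icc (0 : ℝ) 1 ⊆ S := by
    intro x hx
    rw [hSdef, Set.mem_setOf_eq, hnorm]
    have h1 : |x| ≤ 1 := by rw [abs_le]; exact ⟨by linarith [hx.1], hx.2⟩
    calc |x| * ‖D‖ ≤ 1 * ‖D‖ := mul_le_mul_of_nonneg_right h1 (norm_nonneg D)
      _ < 1 := by rwa [one_mul]
  have hSopen : IsOpen S := by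
    have : Continuous (fun x : ℝ => ‖(x : ℂ) • D‖) :=
      (Complex.continuous_ofReal.smul continuous_const).norm
    exact isOpen_Iio.preimage this
  have hunit : ∀ x ∈ S, IsUnit (1 - (x : ℂ) • D) := by
    intro x hx
    have := (Units.oneSub ((x : ℂ) • D) hx).isUnit
    rwa [Units.val_oneSub] at this
  have hgcont : ContinuousOn g S := by
    intro x hx
    apply ContinuousAt.continuousWithinAt
    apply ContinuousAt.mul
    · exact ((continuous_pow (n - 1)).comp Complex.continuous_ofReal).continuousAt
    · exact (aux_traceL_continuous (D ^ n)).continuousAt.comp (aux_inv_continuousAt D x hx)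
  set h : ℝ → ℂ := fun x =>
    (∑ m ∈ Ico 1 n, (1 / (m : ℂ)) * (x : ℂ) ^ m * (D ^ m).trace)
      + ∫ t in (0 : ℝ)..x, g t with hhdef
  have hh' : ∀ x ∈ S, HasDerivAt h ((D * (1 - (x : ℂ) • D)⁻¹).trace) x := by
    intro x hx
    have hsum : HasDerivAt (fun y : ℝ => ∑ m ∈ Ico 1 n, (1 / (m : ℂ)) * (y : ℂ) ^ m * (D ^ m).trace)
        (∑ m ∈ Ico 1 n, (x : ℂ) ^ (m - 1) * (D ^ m).trace) x := by
      refine HasDerivAt.fun_sum fun m hm => ?_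
      have hm1 : 1 ≤ m := (Finset.mem_Ico.mp hm).1
      have hpow : HasDerivAt (fun y : ℝ => ((y : ℂ)) ^ m) ((m : ℂ) * (x : ℂ) ^ (m - 1)) x :=
        (hasDerivAt_pow m ((x : ℂ))).comp_ofReal
      have hterm := (hpow.const_mul (1 / (m : ℂ))).mul_const ((D ^ m).trace)
      refine hterm.congr_deriv ?_
      have hm0 : (m : ℂ) ≠ 0 := Nat.cast_ne_zero.mpr (by omega)
      field_simp
    have hsub : Set.uIcc (0 : ℝ) x ⊆ S := by
      intro t ht
      rw [hSdef, Set.mem_setOf_eq, hnorm]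
      have hx' : |x| * ‖D‖ < 1 := by rw [← hnorm]; exact hx
      have htx : |t| ≤ |x| := by
        rcases Set.mem_uIcc.mp ht with ⟨h1, h2⟩ | ⟨h1, h2⟩
        · rw [abs_of_nonneg h1]; exact le_trans h2 (le_abs_self x)
        · rw [abs_of_nonpos h2]; exact le_trans (neg_le_neg h1) (neg_le_abs x)
      calc |t| * ‖D‖ ≤ |x| * ‖D‖ := mul_le_mul_of_nonneg_right htx (norm_nonneg D)
        _ < 1 := hx'
    have hint : HasDerivAt (fun y : ℝ => ∫ t in (0 : ℝ)..y, g t) (g x) x := by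
      apply intervalIntegral.integral_hasDerivAt_right
      · exact (hgcont.mono hsub).intervalIntegrable
      · exact hgcont.stronglyMeasurableAtFilter hSopen x hx
      · exact (hgcont x hx).continuousAt (hSopen.mem_nhds hx)
    have hadd := hsum.add hint
    refine hadd.congr_deriv ?_
    rw [aux_trace_identity D (x : ℂ) (hunit x hx) hn]
  set F : ℝ → ℂ := fun x => (1 - (x : ℂ) • D).det * Complex.exp (h x) with hFdef
  have hF' : ∀ x ∈ S, HasDerivAt F 0 x := by
    intro x hx
    have h1 := aux_det_hasDerivAt D x (hunit x hx)
    have h2 := (hh' x hx).cexp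
    have := h1.mul h2
    refine this.congr_deriv ?_
    ring
  have hconst : F 1 = F 0 := by
    have := constant_of_has_deriv_right_zero (f := F) (a := 0) (b := 1)
      (fun x hx => ((hF' x (hIccS hx)).continuousAt).continuousWithinAt)
      (fun x hx => ((hF' x (hIccS (Set.mem_Icc_of_Ico hx))).hasDerivWithinAt))
    exact this 1 (Set.mem_Icc.mpr ⟨by norm_num, le_refl 1⟩)
  have h0 : h 0 = 0 := by
    rw [hhdef]
    simp only [Complex.ofReal_zero, intervalIntegral.integral_same, add_zero]
    refine Finset.sum_eq_zero fun m hm => ?_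
    have hm1 : 1 ≤ m := (Finset.mem_Ico.mp hm).1
    rw [zero_pow (by omega : m ≠ 0)]
    ring
  have hF0 : F 0 = 1 := by
    rw [hFdef]
    simp [h0]
  have hF1 : (1 - D).det * Complex.exp (h 1) = 1 := by
    have hc := hconst
    rw [hF0, hFdef] at hc
    simp only [Complex.ofReal_one, one_smul] at hc
    exact hc
  have hdet : (1 - D).det = Complex.exp (-(h 1)) := by
    rw [Complex.exp_neg]
    exact eq_inv_of_mul_eq_one_left hF1
  rw [hdet]
  congr 1
  have hone : h 1 = (∑ m ∈ Ico 1 n, (1 / (m : ℂ)) * (D ^ m).trace)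
      + ∫ x in (0 : ℝ)..1, g x := by
    simp only [hhdef]
    congr 1
    refine Finset.sum_congr rfl fun m _ => ?_
    rw [Complex.ofReal_one, one_pow, mul_one]
  rw [hone, neg_add, sub_eq_add_neg]
end
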